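/- arXiv:1506.09007 — 2 statements merged into one kernel-verified Lean document; each statement's English description precedes it below -/
import Mathlib

section
/- For every p > 1 there exist constants 0 < c_p ≤ C_p < ∞ such that for all real a, b: c_p·(b-a)^2·(max(|a|,|b|))^{p-2} ≤ F(a,b) ≤ C_p·(b-a)^2·(max(|a|,|b|))^{p-2}, where F(a,b) = |b|^p - |a|^p - p·a·|a|^{p-2}·(b-a). -/
/-!
With `ψ = signedRpow p`, `F = powBregman p` is the Bregman divergence of `|t| ^ p`, so
`F a b + F b a = p (ψ b - ψ a) (b - a)` and `F a b = F a m + F m b + p (ψ m - ψ a) (b - m)`.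
Both bounds therefore reduce to `(ψ y - ψ x) (y - x) ≍ (y - x) ^ 2 max (|x|, |y|) ^ (p - 2)`,
which on a half-line is the comparison `v ^ q - u ^ q ≍ (v - u) v ^ (q - 1)` coming from
Bernoulli's inequality, and across `0` is immediate. The upper bound follows from `F b a ≥ 0`;
for the lower bound take `m = (a + b) / 2`, drop `F a m, F m b ≥ 0`, and use that
`max (|a|, |m|)` is comparable to `max (|a|, |b|)`.
-/

open Real

namespace PowBregman

section rpow

variable {q u v : ℝ}

lemma mul_rpow_sub_one (hv : 0 ≤ v) (hq : q ≠ 0) : v * v ^ (q - 1) = v ^ q := by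
  conv_rhs => rw [← add_sub_cancel 1 q, rpow_add' hv (by simpa using hq), rpow_one]

lemma rpow_add_mul_sub_le_rpow (hq : 1 ≤ q) (hu : 0 ≤ u) (hv : 0 < v) :
    v ^ q + q * (u - v) * v ^ (q - 1) ≤ u ^ q := by
  have h := one_add_mul_self_le_rpow_one_add
    (by linarith [div_nonneg hu hv.le] : -1 ≤ u / v - 1) hq
  rw [add_sub_cancel, div_rpow hu hv.le, le_div_iff₀ (rpow_pos_of_pos hv q)] at h
  calc v ^ q + q * (u - v) * v ^ (q - 1) = (1 + q * (u / v - 1)) * v ^ q := by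
        rw [rpow_sub_one hv.ne']; field_simp
    _ ≤ u ^ q := h

lemma rpow_le_rpow_add_mul_sub (hq0 : 0 ≤ q) (hq : q ≤ 1) (hu : 0 ≤ u) (hv : 0 < v) :
    u ^ q ≤ v ^ q + q * (u - v) * v ^ (q - 1) := by
  have h := rpow_one_add_le_one_add_mul_self
    (by linarith [div_nonneg hu hv.le] : -1 ≤ u / v - 1) hq0 hq
  rw [add_sub_cancel, div_rpow hu hv.le, div_le_iff₀ (rpow_pos_of_pos hv q)] at h
  calc u ^ q ≤ (1 + q * (u / v - 1)) * v ^ q := h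
    _ = v ^ q + q * (u - v) * v ^ (q - 1) := by
        rw [rpow_sub_one hv.ne']; field_simp

lemma rpow_le_mul_rpow_sub_one (hq : 1 ≤ q) (hu : 0 ≤ u) (huv : u ≤ v) :
    u ^ q ≤ u * v ^ (q - 1) := by
  rw [← mul_rpow_sub_one hu (by linarith)]
  exact mul_le_mul_of_nonneg_left (rpow_le_rpow hu huv (by linarith)) hu

lemma mul_rpow_sub_one_le_rpow (hq0 : 0 < q) (hq : q ≤ 1) (hu : 0 ≤ u) (huv : u ≤ v) :
    u * v ^ (q - 1) ≤ u ^ q := by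
  rcases hu.eq_or_lt with rfl | hu
  · simp [zero_rpow hq0.ne']
  rw [← mul_rpow_sub_one hu.le hq0.ne']
  exact mul_le_mul_of_nonneg_left (rpow_le_rpow_of_nonpos hu huv (by linarith)) hu.le

lemma rpow_sub_rpow_le (hq : 0 < q) (hu : 0 ≤ u) (huv : u ≤ v) :
    v ^ q - u ^ q ≤ max q 1 * (v - u) * v ^ (q - 1) := by
  rcases (hu.trans huv).eq_or_lt with rfl | hv
  · obtain rfl : u = 0 := le_antisymm huv hu
    simp
  have hv' := mul_rpow_sub_one hv.le hq.ne'
  rcases le_total 1 q with h1 | h1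
  · rw [max_eq_left h1]
    linarith [rpow_add_mul_sub_le_rpow h1 hu hv]
  · rw [max_eq_right h1]
    linarith [mul_rpow_sub_one_le_rpow hq h1 hu huv]

lemma min_mul_le_rpow_sub_rpow (hq : 0 < q) (hu : 0 ≤ u) (huv : u ≤ v) :
    min q 1 * (v - u) * v ^ (q - 1) ≤ v ^ q - u ^ q := by
  rcases (hu.trans huv).eq_or_lt with rfl | hv
  · obtain rfl : u = 0 := le_antisymm huv hu
    simp
  have hv' := mul_rpow_sub_one hv.le hq.ne'
  rcases le_total 1 q with h1 | h1
  · rw [min_eq_right h1]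
    linarith [rpow_le_mul_rpow_sub_one h1 hu huv]
  · rw [min_eq_left h1]
    linarith [rpow_le_rpow_add_mul_sub hq.le h1 hu hv]

lemma rpow_add_rpow_bounds (hq : 0 < q) (hu : 0 ≤ u) (hv : 0 ≤ v) :
    (u + v) / 2 * max u v ^ (q - 1) ≤ u ^ q + v ^ q ∧
      u ^ q + v ^ q ≤ 2 * (u + v) * max u v ^ (q - 1) := by
  set M := max u v
  have hM : M * M ^ (q - 1) = M ^ q := mul_rpow_sub_one (hu.trans (le_max_left u v)) hq.ne'
  have hMq : 0 ≤ M ^ (q - 1) := rpow_nonneg (hu.trans (le_max_left u v)) _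
  have huM : u ^ q ≤ M ^ q := rpow_le_rpow hu (le_max_left u v) hq.le
  have hvM : v ^ q ≤ M ^ q := rpow_le_rpow hv (le_max_right u v) hq.le
  have hMuv : M ^ q ≤ u ^ q + v ^ q := by
    rcases max_choice u v with h | h <;> simp only [M, h] <;>
      linarith [rpow_nonneg hu q, rpow_nonneg hv q]
  have hsum : u + v ≤ 2 * M := by linarith [le_max_left u v, le_max_right u v]
  have hM_le : M ≤ u + v := max_le (by linarith) (by linarith)
  constructor
  · nlinarith [mul_le_mul_of_nonneg_right hsum hMq]
  · nlinarith [mul_le_mul_of_nonneg_right hM_le hMq]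

lemma min_rpow_mul_rpow_le_rpow {r M N e : ℝ} (hr : 0 < r) (hN : 0 ≤ N) (hrN : r * M ≤ N)
    (hNM : N ≤ M) : min (r ^ e) 1 * M ^ e ≤ N ^ e := by
  rcases hN.eq_or_lt with rfl | hN
  · obtain rfl : M = 0 := le_antisymm (by nlinarith) hNM
    nlinarith [min_le_right (r ^ e) 1, rpow_nonneg le_rfl e]
  have hM : 0 ≤ M ^ e := rpow_nonneg (hN.le.trans hNM) e
  rcases le_total 0 e with he | he
  · calc min (r ^ e) 1 * M ^ e ≤ r ^ e * M ^ e := by gcongr; exact min_le_left _ _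
      _ = (r * M) ^ e := (mul_rpow hr.le (hN.le.trans hNM)).symm
      _ ≤ N ^ e := rpow_le_rpow (by nlinarith) hrN he
  · calc min (r ^ e) 1 * M ^ e ≤ M ^ e := mul_le_of_le_one_left hM (min_le_right _ _)
      _ ≤ N ^ e := rpow_le_rpow_of_nonpos hN hNM he

end rpow

section signedRpow

noncomputable def signedRpow (p t : ℝ) : ℝ := t * |t| ^ (p - 2)

variable {p x y : ℝ}

lemma signedRpow_of_nonneg (hp : 1 < p) (hx : 0 ≤ x) : signedRpow p x = x ^ (p - 1) := by
  rw [signedRpow, abs_of_nonneg hx, show p - 2 = p - 1 - 1 by ring,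
    mul_rpow_sub_one hx (by linarith)]

lemma signedRpow_neg (p x : ℝ) : signedRpow p (-x) = -signedRpow p x := by
  simp [signedRpow]

lemma signedRpow_sub_bounds_of_nonneg (hp : 1 < p) (hx : 0 ≤ x) (hxy : x ≤ y) :
    min (p - 1) 1 / 2 * (y - x) * y ^ (p - 2) ≤ signedRpow p y - signedRpow p x ∧
      signedRpow p y - signedRpow p x ≤ (p + 1) * (y - x) * y ^ (p - 2) := by
  have hw : 0 ≤ (y - x) * y ^ (p - 2) := mul_nonneg (by linarith) (rpow_nonneg (hx.trans hxy) _)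
  have hlo := min_mul_le_rpow_sub_rpow (q := p - 1) (by linarith) hx hxy
  have hhi := rpow_sub_rpow_le (q := p - 1) (by linarith) hx hxy
  rw [show p - 1 - 1 = p - 2 by ring] at hlo hhi
  rw [signedRpow_of_nonneg hp hx, signedRpow_of_nonneg hp (hx.trans hxy)]
  have hκ : 0 ≤ min (p - 1) 1 := le_min (by linarith) zero_le_one
  have hK : max (p - 1) 1 ≤ p + 1 := max_le (by linarith) (by linarith)
  constructor
  · nlinarith
  · nlinarith

lemma signedRpow_sub_bounds_of_nonpos_of_nonneg (hp : 1 < p) (hx : x ≤ 0) (hy : 0 ≤ y) :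
    min (p - 1) 1 / 2 * (y - x) * max |x| |y| ^ (p - 2) ≤ signedRpow p y - signedRpow p x ∧
      signedRpow p y - signedRpow p x ≤ (p + 1) * (y - x) * max |x| |y| ^ (p - 2) := by
  have hψ : signedRpow p y - signedRpow p x = (-x) ^ (p - 1) + y ^ (p - 1) := by
    rw [← neg_neg x, signedRpow_neg, signedRpow_of_nonneg hp hy,
      signedRpow_of_nonneg hp (neg_nonneg.2 hx), neg_neg]
    ring
  obtain ⟨hlo, hhi⟩ := rpow_add_rpow_bounds (q := p - 1) (by linarith) (neg_nonneg.2 hx) hy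
  rw [show p - 1 - 1 = p - 2 by ring, show -x + y = y - x by ring] at hlo hhi
  rw [hψ, abs_of_nonpos hx, abs_of_nonneg hy]
  have hw : 0 ≤ (y - x) * max (-x) y ^ (p - 2) :=
    mul_nonneg (by linarith) (rpow_nonneg (hy.trans (le_max_right _ _)) _)
  have hκ : min (p - 1) 1 ≤ 1 := min_le_right _ _
  constructor
  · nlinarith
  · nlinarith

lemma signedRpow_sub_bounds (hp : 1 < p) (hxy : x ≤ y) :
    min (p - 1) 1 / 2 * (y - x) * max |x| |y| ^ (p - 2) ≤ signedRpow p y - signedRpow p x ∧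
      signedRpow p y - signedRpow p x ≤ (p + 1) * (y - x) * max |x| |y| ^ (p - 2) := by
  rcases le_total 0 x with hx | hx
  · have hM : max |x| |y| = y := by
      rw [abs_of_nonneg hx, abs_of_nonneg (hx.trans hxy), max_eq_right hxy]
    rw [hM]
    exact signedRpow_sub_bounds_of_nonneg hp hx hxy
  rcases le_total 0 y with hy | hy
  · exact signedRpow_sub_bounds_of_nonpos_of_nonneg hp hx hy
  have hM : max |x| |y| = -x := by
    rw [abs_of_nonpos hx, abs_of_nonpos hy, max_eq_left (neg_le_neg hxy)]
  have h := signedRpow_sub_bounds_of_nonneg hp (neg_nonneg.2 hy) (neg_le_neg hxy)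
  rwa [signedRpow_neg, signedRpow_neg, neg_sub_neg, neg_sub_neg, ← hM] at h

lemma signedRpow_sub_mul_sub_bounds (hp : 1 < p) (x y : ℝ) :
    min (p - 1) 1 / 2 * (y - x) ^ 2 * max |x| |y| ^ (p - 2) ≤
        (signedRpow p y - signedRpow p x) * (y - x) ∧
      (signedRpow p y - signedRpow p x) * (y - x) ≤
        (p + 1) * (y - x) ^ 2 * max |x| |y| ^ (p - 2) := by
  wlog hxy : x ≤ y generalizing x y
  · have h := this y x (le_of_not_ge hxy)
    rwa [max_comm, ← neg_sub y x, neg_sq, ← neg_sub (signedRpow p y), neg_mul_neg] at h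
  obtain ⟨hlo, hhi⟩ := signedRpow_sub_bounds hp hxy
  have hyx : 0 ≤ y - x := sub_nonneg.2 hxy
  constructor
  · nlinarith [mul_le_mul_of_nonneg_right hlo hyx]
  · nlinarith [mul_le_mul_of_nonneg_right hhi hyx]

end signedRpow

section powBregman

noncomputable def powBregman (p a b : ℝ) : ℝ :=
  |b| ^ p - |a| ^ p - p * a * |a| ^ (p - 2) * (b - a)

variable {p : ℝ}

lemma powBregman_nonneg (hp : 1 ≤ p) (a b : ℝ) : 0 ≤ powBregman p a b := by
  rcases eq_or_ne a 0 with rfl | ha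
  · simp [powBregman, zero_rpow (show p ≠ 0 by linarith)]
    positivity
  have htangent := rpow_add_mul_sub_le_rpow hp (abs_nonneg b) (abs_pos.2 ha)
  have hpow : |a| ^ (p - 1) = |a| * |a| ^ (p - 2) := by
    rw [show p - 2 = p - 1 - 1 by ring, rpow_sub_one (abs_pos.2 ha).ne' (p - 1)]
    field_simp
  have hlin : a * (b - a) ≤ |a| * (|b| - |a|) := by
    nlinarith [abs_mul_abs_self a, abs_mul a b, le_abs_self (a * b)]
  have hw : 0 ≤ p * |a| ^ (p - 2) := by positivity
  rw [hpow] at htangent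
  rw [powBregman]
  linarith [mul_le_mul_of_nonneg_left hlin hw]

lemma powBregman_add_powBregman_swap (p a b : ℝ) :
    powBregman p a b + powBregman p b a = p * (signedRpow p b - signedRpow p a) * (b - a) := by
  unfold powBregman signedRpow
  ring

lemma powBregman_three_point (p a m b : ℝ) :
    powBregman p a b =
      powBregman p a m + powBregman p m b + p * (signedRpow p m - signedRpow p a) * (b - m) := by
  unfold powBregman signedRpow
  ring

lemma powBregman_le (hp : 1 < p) (a b : ℝ) :
    powBregman p a b ≤ p * (p + 1) * (b - a) ^ 2 * max |a| |b| ^ (p - 2) := by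
  have hswap := powBregman_add_powBregman_swap p a b
  have hba := powBregman_nonneg hp.le b a
  have hψ := (signedRpow_sub_mul_sub_bounds hp a b).2
  linarith [mul_le_mul_of_nonneg_left hψ (by linarith : (0 : ℝ) ≤ p)]

lemma max_abs_midpoint_bounds (a b : ℝ) :
    3⁻¹ * max |a| |b| ≤ max |a| |(a + b) / 2| ∧ max |a| |(a + b) / 2| ≤ max |a| |b| := by
  have hm : |(a + b) / 2| = |a + b| / 2 := by rw [abs_div, abs_two]
  have hab := abs_add_le a b
  have hb : |b| ≤ |a + b| + |a| := by simpa using abs_sub (a + b) a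
  rw [hm]
  constructor
  · rw [inv_mul_le_iff₀ three_pos]
    exact max_le (by linarith [le_max_left |a| (|a + b| / 2), abs_nonneg a])
      (by linarith [le_max_left |a| (|a + b| / 2), le_max_right |a| (|a + b| / 2)])
  · exact max_le (le_max_left _ _) (by linarith [le_max_left |a| |b|, le_max_right |a| |b|])

lemma le_powBregman (hp : 1 < p) (a b : ℝ) :
    p * (min (p - 1) 1 / 8) * min ((3⁻¹ : ℝ) ^ (p - 2)) 1 * (b - a) ^ 2 * max |a| |b| ^ (p - 2)
      ≤ powBregman p a b := by
  obtain ⟨hlow, hup⟩ := max_abs_midpoint_bounds a b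
  have hcmp := min_rpow_mul_rpow_le_rpow (e := p - 2) (by norm_num) (by positivity) hlow hup
  have hψ := (signedRpow_sub_mul_sub_bounds hp a ((a + b) / 2)).1
  have hsplit := powBregman_three_point p a ((a + b) / 2) b
  have ham := powBregman_nonneg hp.le a ((a + b) / 2)
  have hmb := powBregman_nonneg hp.le ((a + b) / 2) b
  have hmid : b - (a + b) / 2 = (a + b) / 2 - a := by ring
  rw [hmid] at hsplit
  calc _ = p * (min (p - 1) 1 / 8) * (b - a) ^ 2 *
        (min ((3⁻¹ : ℝ) ^ (p - 2)) 1 * max |a| |b| ^ (p - 2)) := by ring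
    _ ≤ p * (min (p - 1) 1 / 8) * (b - a) ^ 2 * max |a| |(a + b) / 2| ^ (p - 2) := by gcongr
    _ = p * (min (p - 1) 1 / 2 * ((a + b) / 2 - a) ^ 2 * max |a| |(a + b) / 2| ^ (p - 2)) := by
        ring
    _ ≤ p * ((signedRpow p ((a + b) / 2) - signedRpow p a) * ((a + b) / 2 - a)) := by
        gcongr
    _ ≤ powBregman p a b := by linarith

end powBregman

end PowBregman

open PowBregman in
/-- For every `p > 1` there are constants `0 < c_p ≤ C_p < ∞` with
`c_p (b-a)^2 (|a| ⊔ |b|)^(p-2) ≤ F(a,b) ≤ C_p (b-a)^2 (|a| ⊔ |b|)^(p-2)`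
for all real `a, b`, where `F(a,b) = |b|^p - |a|^p - p a |a|^(p-2) (b-a)`. -/
theorem F_two_sided_bound (p : ℝ) (hp : 1 < p) :
    ∃ c C : ℝ, 0 < c ∧ c ≤ C ∧ ∀ a b : ℝ,
      c * (b - a) ^ 2 * (max |a| |b|) ^ (p - 2)
        ≤ |b| ^ p - |a| ^ p - p * a * |a| ^ (p - 2) * (b - a) ∧
      |b| ^ p - |a| ^ p - p * a * |a| ^ (p - 2) * (b - a)
        ≤ C * (b - a) ^ 2 * (max |a| |b|) ^ (p - 2) := by
  refine ⟨p * (min (p - 1) 1 / 8) * min ((3⁻¹ : ℝ) ^ (p - 2)) 1, p * (p + 1), by positivity, ?_,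
    fun a b => ⟨le_powBregman hp a b, powBregman_le hp a b⟩⟩
  calc _ ≤ p * (1 / 8) * 1 := by gcongr <;> exact min_le_right _ _
    _ ≤ p * (p + 1) := by nlinarith
end

section
/- For 1 < p < 2 and all real ε, a, b, one has 0 ≤ F_ε(a,b) ≤ (1/(p-1))·F(a,b), where F_ε(a,b) = (b²+ε²)^{p/2} - (a²+ε²)^{p/2} - p·a·(a²+ε²)^{(p-2)/2}(b-a) and F(a,b) = |b|^p - |a|^p - p·a·|a|^{p-2}(b-a). -/
/-!
Write `φ_c(x) = (x² + c) ^ (p/2)` for `c ≥ 0`, so that `φ_0(x) = |x| ^ p` and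
`φ_c'(x) = p x (x² + c) ^ ((p-2)/2)`. Both `F_ε(a, b)` and `F(a, b)` are the remainders
`f b - f a - f' a (b - a)` of tangent lines, for `f = φ_{ε²}` and `f = φ_0`; such a remainder is
nonnegative as soon as `f'` is monotone. This gives `F_ε ≥ 0`, and applied to
`ψ = φ_0 / (p - 1) - φ_c`, `c = ε²`, it gives the upper bound. Since `ψ'` is odd and
nonnegative on `x > 0`, its monotonicity reduces to `x > 0`, where
`(ψ'/p)' = (x²) ^ ((p-2)/2) - (x² + c) ^ ((p-4)/2) ((p-1) x² + c)` is nonnegative by using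
`p ≤ 2` twice: `(p-1) x² + c ≤ x² + c` and `(x² + c) ^ ((p-2)/2) ≤ (x²) ^ ((p-2)/2)`.
-/

open Real Set

theorem monotone_of_odd_of_monotoneOn_pos {G H : Type*} [AddCommGroup G] [LinearOrder G]
    [IsOrderedAddMonoid G] [AddCommGroup H] [PartialOrder H] [IsOrderedAddMonoid H] {f : G → H}
    (hodd : ∀ x, f (-x) = -f x) (hpos : ∀ x, 0 < x → f 0 ≤ f x)
    (hmono : MonotoneOn f (Ioi 0)) : Monotone f := by
  refine monotone_of_odd_of_monotoneOn_nonneg hodd ?_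
  rw [← Ioi_insert]
  exact monotoneOn_insert_iff.2
    ⟨fun x hx hx₀ => absurd hx₀ (not_le.2 hx), fun x hx _ => hpos x hx, hmono⟩

lemma monotoneOn_of_hasDerivAt_nonneg {D : Set ℝ} (hD : Convex ℝ D) {f f' : ℝ → ℝ}
    (hf : ∀ x ∈ D, HasDerivAt f (f' x) x) (hf' : ∀ x ∈ D, 0 ≤ f' x) : MonotoneOn f D :=
  monotoneOn_of_hasDerivWithinAt_nonneg hD
    (fun x hx => (hf x hx).continuousAt.continuousWithinAt)
    (fun x hx => (hf x (interior_subset hx)).hasDerivWithinAt)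
    fun x hx => hf' x (interior_subset hx)

theorem add_mul_sub_le_of_hasDerivAt {f f' : ℝ → ℝ} (hf : ∀ x, HasDerivAt f (f' x) x)
    (hf' : Monotone f') (a b : ℝ) : f a + f' a * (b - a) ≤ f b := by
  have hconv : ConvexOn ℝ univ f :=
    MonotoneOn.convexOn_of_deriv convex_univ
      (fun x _ => (hf x).continuousAt.continuousWithinAt)
      (fun x _ => (hf x).differentiableAt.differentiableWithinAt)
      (by simpa only [funext fun x => (hf x).deriv] using hf'.monotoneOn _)
  rcases lt_trichotomy a b with hab | rfl | hab
  · have := hconv.le_slope_of_hasDerivAt trivial trivial hab (hf a)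
    rw [slope_def_field, le_div_iff₀ (sub_pos.2 hab)] at this
    linarith
  · simp
  · have := hconv.slope_le_of_hasDerivAt trivial trivial hab (hf a)
    rw [slope_def_field, div_le_iff₀ (sub_pos.2 hab)] at this
    linarith

lemma sq_rpow_div_two (x t : ℝ) : (x ^ 2) ^ (t / 2) = |x| ^ t := by
  rw [← sq_abs, ← rpow_natCast_mul (abs_nonneg x)]; push_cast; ring_nf

section
variable {p c : ℝ}

lemma hasDerivAt_sq_add_rpow_div_two (hp : 1 < p) (hc : 0 ≤ c) (x : ℝ) :
    HasDerivAt (fun y => (y ^ 2 + c) ^ (p / 2)) (p * (x * (x ^ 2 + c) ^ ((p - 2) / 2))) x := by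
  rcases (add_nonneg (sq_nonneg x) hc).eq_or_lt with h | h
  · obtain ⟨rfl, rfl⟩ : x = 0 ∧ c = 0 := by constructor <;> nlinarith [sq_nonneg x]
    simpa [sq_rpow_div_two] using hasDerivAt_abs_rpow 0 hp
  · refine (((hasDerivAt_pow 2 x).add_const c).rpow_const (p := p / 2)
      (Or.inl h.ne')).congr_deriv ?_
    rw [show p / 2 - 1 = (p - 2) / 2 by ring]; push_cast; ring

lemma hasDerivAt_mul_sq_add_rpow {x : ℝ} (hx : x ^ 2 + c ≠ 0) :
    HasDerivAt (fun y => y * (y ^ 2 + c) ^ ((p - 2) / 2))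
      ((x ^ 2 + c) ^ ((p - 2) / 2 - 1) * ((p - 1) * x ^ 2 + c)) x := by
  refine ((hasDerivAt_id x).mul (((hasDerivAt_pow 2 x).add_const c).rpow_const
    (p := (p - 2) / 2) (Or.inl hx))).congr_deriv ?_
  rw [rpow_sub_one hx, id_eq]
  field_simp
  push_cast
  ring

lemma monotone_mul_sq_add_rpow (hp : 1 ≤ p) (hc : 0 ≤ c) :
    Monotone fun x : ℝ => x * (x ^ 2 + c) ^ ((p - 2) / 2) := by
  refine monotone_of_odd_of_monotoneOn_pos (fun x => by simp)
    (fun x hx => by simp only [zero_mul]; positivity)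
    (monotoneOn_of_hasDerivAt_nonneg (convex_Ioi 0)
      (fun x (hx : 0 < x) => hasDerivAt_mul_sq_add_rpow (by positivity)) fun x _ => ?_)
  exact mul_nonneg (by positivity)
    (add_nonneg (mul_nonneg (sub_nonneg.2 hp) (sq_nonneg x)) hc)

lemma monotone_mul_sq_rpow_div_sub_mul_sq_add_rpow (hp₁ : 1 < p) (hp₂ : p ≤ 2) (hc : 0 ≤ c) :
    Monotone fun x : ℝ =>
      x * (x ^ 2) ^ ((p - 2) / 2) / (p - 1) - x * (x ^ 2 + c) ^ ((p - 2) / 2) := by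
  have hp : 0 < p - 1 := sub_pos.2 hp₁
  have hdecr {x : ℝ} (hx : 0 < x) : (x ^ 2 + c) ^ ((p - 2) / 2) ≤ (x ^ 2) ^ ((p - 2) / 2) :=
    rpow_le_rpow_of_nonpos (by positivity) (by linarith) (by linarith)
  have hderiv (x : ℝ) (hx : x ∈ Ioi 0) : HasDerivAt
      (fun x : ℝ => x * (x ^ 2) ^ ((p - 2) / 2) / (p - 1) - x * (x ^ 2 + c) ^ ((p - 2) / 2))
      ((x ^ 2) ^ ((p - 2) / 2) - (x ^ 2 + c) ^ ((p - 2) / 2 - 1) * ((p - 1) * x ^ 2 + c))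
      x := by
    have hx : 0 < x := hx
    have h₀ := hasDerivAt_mul_sq_add_rpow (p := p) (c := 0) (x := x) (by positivity)
    simp only [add_zero] at h₀
    refine (h₀.div_const (p - 1)).sub (hasDerivAt_mul_sq_add_rpow (by positivity))
      |>.congr_deriv ?_
    rw [rpow_sub_one (by positivity)]
    field_simp
  refine monotone_of_odd_of_monotoneOn_pos (fun x => by simp only [neg_sq]; ring)
    (fun x hx => ?_) (monotoneOn_of_hasDerivAt_nonneg (convex_Ioi 0) hderiv fun x hx => ?_)
  · have h₁ : x * (x ^ 2 + c) ^ ((p - 2) / 2) ≤ x * (x ^ 2) ^ ((p - 2) / 2) :=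
      mul_le_mul_of_nonneg_left (hdecr hx) hx.le
    have h₂ : x * (x ^ 2) ^ ((p - 2) / 2) ≤ x * (x ^ 2) ^ ((p - 2) / 2) / (p - 1) :=
      le_div_self (by positivity) hp (by linarith)
    simp only [zero_mul, zero_div, sub_zero]
    linarith
  · have hx : 0 < x := hx
    have hpos : 0 < x ^ 2 + c := by positivity
    refine sub_nonneg.2 <| calc
      (x ^ 2 + c) ^ ((p - 2) / 2 - 1) * ((p - 1) * x ^ 2 + c)
        ≤ (x ^ 2 + c) ^ ((p - 2) / 2 - 1) * (x ^ 2 + c) :=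
          mul_le_mul_of_nonneg_left (by nlinarith) (by positivity)
      _ = (x ^ 2 + c) ^ ((p - 2) / 2) := by
          rw [rpow_sub_one hpos.ne', div_mul_cancel₀ _ hpos.ne']
      _ ≤ (x ^ 2) ^ ((p - 2) / 2) := hdecr hx

end

/-- For `1 < p < 2` and all real `ε, a, b`:
`0 ≤ F_ε(a,b) ≤ (1/(p-1)) F(a,b)`, where
`F_ε(a,b) = (b²+ε²)^(p/2) - (a²+ε²)^(p/2) - p a (a²+ε²)^((p-2)/2) (b-a)` and
`F(a,b) = |b|^p - |a|^p - p a |a|^(p-2) (b-a)`. -/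
theorem Feps_le_F (p : ℝ) (hp1 : 1 < p) (hp2 : p < 2) (ε a b : ℝ) :
    0 ≤ (b ^ 2 + ε ^ 2) ^ (p / 2) - (a ^ 2 + ε ^ 2) ^ (p / 2)
        - p * a * (a ^ 2 + ε ^ 2) ^ ((p - 2) / 2) * (b - a) ∧
    (b ^ 2 + ε ^ 2) ^ (p / 2) - (a ^ 2 + ε ^ 2) ^ (p / 2)
        - p * a * (a ^ 2 + ε ^ 2) ^ ((p - 2) / 2) * (b - a)
      ≤ (1 / (p - 1)) * (|b| ^ p - |a| ^ p - p * a * |a| ^ (p - 2) * (b - a)) := by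
  have hε : 0 ≤ ε ^ 2 := sq_nonneg ε
  have hp : 0 ≤ p := by linarith
  have hφ := hasDerivAt_sq_add_rpow_div_two hp1 hε
  have hφ₀ := hasDerivAt_sq_add_rpow_div_two hp1 le_rfl
  simp only [add_zero] at hφ₀
  constructor
  · linear_combination add_mul_sub_le_of_hasDerivAt hφ
      ((monotone_mul_sq_add_rpow hp1.le hε).const_mul hp) a b
  · have hψ (x : ℝ) := ((hφ₀ x).div_const (p - 1)).sub (hφ x)
    have hψ' := (monotone_mul_sq_rpow_div_sub_mul_sq_add_rpow hp1 hp2.le hε).const_mul hp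
    simp only [mul_sub, ← mul_div_assoc] at hψ'
    have := add_mul_sub_le_of_hasDerivAt hψ hψ' a b
    simp only [Pi.sub_apply, sq_rpow_div_two] at this
    linear_combination this
end
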